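/- There exists an integer k_0 such that for all k ≥ k_0 and every y ∈ [0,1) (with the convention 0·ln 0 = 0), setting A = (1−√y)², B = y·ln y + 2(1−y) − 2(1−√y) + 60·k·(1−y)²/2^k, h(α) = −α·ln α − (1−α)·ln(1−α), and M(α) = (ln 2 − h(α))/(A·α^k + B): for every α with 1 − 3·ln k/k ≤ α ≤ 2^{−1/k}, one has M(α) > M(1). -/

import Mathlib

open Real

noncomputable section

/-- The binary-type entropy `h(α) = −α ln α − (1−α) ln(1−α)`
(with `0 · ln 0 = 0`, automatic since `Real.log 0 = 0`). -/
def hEnt (α : ℝ) : ℝ := -α * Real.log α - (1-α) * Real.log (1-α)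

/-- `M(α) = (ln 2 − h(α))/(A α^k + B)` with `A = (1−√y)²` and
`B = y ln y + 2(1−y) − 2(1−√y) + 60 k (1−y)²/2^k`. -/
def Mfun (k : ℕ) (y α : ℝ) : ℝ :=
  (Real.log 2 - hEnt α) /
    ((1 - Real.sqrt y)^2 * α^k +
      (y * Real.log y + 2*(1-y) - 2*(1-Real.sqrt y) + 60*k*(1-y)^2/(2:ℝ)^k))

/-!
Since `A + B = y ln y + (1 - y) + 60 k (1-y)²/2^k` and
`(1-√y)² ≤ y ln y + 1 - y ≤ (1-y)² ≤ 4(1-√y)²`, once `240 k ≤ 2^k` we have `B > 0` and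
`A + B ≤ 5A`. Clearing denominators, `M(1) < M(α)` becomes `h(α)(A + B) < A ln 2 (1 - α^k)`.
On the given range `α^k ≤ 1/2`, and `1 - α ≤ 3 ln k/k` is so small that `h(α) ≤ 3/100`;
so the left side is at most `0.15 A` and the right side at least `0.34 A`.
-/

open Filter

lemma hEnt_eq_negMulLog_add (α : ℝ) : hEnt α = negMulLog α + negMulLog (1 - α) := by
  simp only [hEnt, negMulLog]
  ring

lemma hEnt_nonneg {α : ℝ} (h0 : 0 ≤ α) (h1 : α ≤ 1) : 0 ≤ hEnt α := by
  rw [hEnt_eq_negMulLog_add]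
  exact add_nonneg (negMulLog_nonneg h0 h1) (negMulLog_nonneg (by linarith) (by linarith))

lemma negMulLog_le_two_mul_sqrt {x : ℝ} (hx : 0 ≤ x) : negMulLog x ≤ 2 * √x := by
  have hs := sqrt_nonneg x
  have hmul : negMulLog x = 2 * √x * negMulLog √x := by
    conv_lhs => rw [← mul_self_sqrt hx]
    rw [negMulLog_mul]
    ring
  rw [hmul]
  nlinarith [mul_le_mul_of_nonneg_left (negMulLog_le_one_sub_self hs)
    (by positivity : (0 : ℝ) ≤ 2 * √x)]

lemma hEnt_le {α : ℝ} (h0 : 0 ≤ α) (h1 : α ≤ 1) : hEnt α ≤ (1 - α) + 2 * √(1 - α) := by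
  rw [hEnt_eq_negMulLog_add]
  exact add_le_add (negMulLog_le_one_sub_self h0) (negMulLog_le_two_mul_sqrt (by linarith))

lemma hEnt_le_three_div_hundred {α : ℝ} (hα : 1 - 1 / 10000 ≤ α) (h1 : α ≤ 1) :
    hEnt α ≤ 3 / 100 := by
  have hsqrt : √(1 - α) ≤ 1 / 100 := by
    rw [sqrt_le_left (by norm_num)]
    linarith
  linarith [hEnt_le (by linarith) h1]

lemma sq_one_sub_sqrt_le_mul_log_add_one_sub {y : ℝ} (hy : 0 ≤ y) :
    (1 - √y) ^ 2 ≤ y * log y + 1 - y := by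
  have hs := sqrt_nonneg y
  have hlog : y * log y = 2 * √y * (√y * log √y) := by
    rw [log_sqrt hy]
    nth_rw 1 [← mul_self_sqrt hy]
    ring
  rw [hlog]
  nlinarith [mul_le_mul_of_nonneg_left (self_sub_one_le_mul_log hs) (by positivity : 0 ≤ 2 * √y),
    sq_sqrt hy]

lemma mul_log_add_one_sub_le_sq {y : ℝ} (hy : 0 ≤ y) : y * log y + 1 - y ≤ (1 - y) ^ 2 := by
  rcases hy.eq_or_lt with rfl | hy
  · simp
  · nlinarith [mul_le_mul_of_nonneg_left (log_le_sub_one_of_pos hy) hy.le]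

lemma sq_one_sub_le_four_mul_sq_one_sub_sqrt {y : ℝ} (hy0 : 0 ≤ y) (hy1 : y ≤ 1) :
    (1 - y) ^ 2 ≤ 4 * (1 - √y) ^ 2 := by
  have hs1 : √y ≤ 1 := sqrt_le_one.mpr hy1
  have hfactor : (1 - y) ^ 2 = (1 - √y) ^ 2 * (1 + √y) ^ 2 := by
    linear_combination (2 - y - √y ^ 2) * sq_sqrt hy0
  rw [hfactor, mul_comm 4]
  gcongr
  nlinarith [sqrt_nonneg y]

section Denominator

variable {k : ℕ} {y : ℝ}

lemma sixty_mul_sq_div_two_pow_le (hk : 240 * (k : ℝ) / 2 ^ k ≤ 1) (hy0 : 0 ≤ y) (hy1 : y ≤ 1) :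
    60 * k * (1 - y) ^ 2 / (2 : ℝ) ^ k ≤ (1 - √y) ^ 2 := by
  have h2k : (0 : ℝ) < 2 ^ k := by positivity
  rw [div_le_one h2k] at hk
  rw [div_le_iff₀ h2k]
  nlinarith [mul_le_mul_of_nonneg_left (sq_one_sub_le_four_mul_sq_one_sub_sqrt hy0 hy1)
      (by positivity : (0 : ℝ) ≤ 60 * k),
    mul_le_mul_of_nonneg_right hk (sq_nonneg (1 - √y))]

lemma Mfun_denom_const_pos (hk : 0 < k) (hy0 : 0 ≤ y) (hy1 : y < 1) :
    0 < y * log y + 2 * (1 - y) - 2 * (1 - √y) + 60 * k * (1 - y) ^ 2 / (2 : ℝ) ^ k := by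
  have hc : 0 < 60 * k * (1 - y) ^ 2 / (2 : ℝ) ^ k := by
    have : 0 < 1 - y := by linarith
    positivity
  nlinarith [sq_one_sub_sqrt_le_mul_log_add_one_sub hy0, sq_sqrt hy0]

lemma Mfun_denom_at_one_le (hk : 240 * (k : ℝ) / 2 ^ k ≤ 1) (hy0 : 0 ≤ y) (hy1 : y ≤ 1) :
    (1 - √y) ^ 2 + (y * log y + 2 * (1 - y) - 2 * (1 - √y) + 60 * k * (1 - y) ^ 2 / (2 : ℝ) ^ k)
      ≤ 5 * (1 - √y) ^ 2 := by
  nlinarith [mul_log_add_one_sub_le_sq hy0, sq_one_sub_le_four_mul_sq_one_sub_sqrt hy0 hy1,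
    sixty_mul_sq_div_two_pow_le hk hy0 hy1, sq_sqrt hy0]

end Denominator

lemma div_lt_sub_div_of_ten_mul_lt {A B a h L : ℝ} (hA : 0 < A) (hB : 0 < B)
    (hAB : A + B ≤ 5 * A) (ha0 : 0 ≤ a) (ha : a ≤ 1 / 2) (hh0 : 0 ≤ h) (hhL : 10 * h < L) :
    L / (A + B) < (L - h) / (A * a + B) := by
  rw [div_lt_div_iff₀ (by positivity) (by positivity)]
  nlinarith [mul_le_mul_of_nonneg_left hAB hh0, mul_le_mul_of_nonneg_left ha hA.le, mul_pos hA hB]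

lemma pow_le_half_of_le_rpow {k : ℕ} {α : ℝ} (hk : 0 < k) (hα : 0 ≤ α)
    (h : α ≤ (2 : ℝ) ^ (-(1 : ℝ) / k)) : α ^ k ≤ 1 / 2 := by
  calc α ^ k ≤ ((2 : ℝ) ^ (-(1 : ℝ) / k)) ^ k := by gcongr
    _ = 1 / 2 := by
      rw [← rpow_mul_natCast zero_le_two, div_mul_cancel₀ _ (by positivity), rpow_neg_one,
        one_div]

lemma Mfun_one_lt {k : ℕ} {y α : ℝ} (hk0 : 0 < k) (hk : 240 * (k : ℝ) / 2 ^ k ≤ 1)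
    (hy0 : 0 ≤ y) (hy1 : y < 1) (hα0 : 0 ≤ α) (hαk : α ^ k ≤ 1 / 2) (hh0 : 0 ≤ hEnt α)
    (hh : hEnt α ≤ 3 / 100) : Mfun k y 1 < Mfun k y α := by
  have hA : 0 < (1 - √y) ^ 2 := by
    have : √y < 1 := (sqrt_lt' one_pos).2 (by linarith)
    nlinarith
  have hlog2 : 10 * hEnt α < log 2 := by linarith [log_two_gt_d9]
  have := div_lt_sub_div_of_ten_mul_lt hA (Mfun_denom_const_pos hk0 hy0 hy1)
    (Mfun_denom_at_one_le hk hy0 hy1.le) (pow_nonneg hα0 k) hαk hh0 hlog2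
  have hEnt_one : hEnt 1 = 0 := by simp [hEnt]
  rwa [Mfun, Mfun, one_pow, mul_one, hEnt_one, sub_zero]

lemma eventually_three_mul_log_div_le : ∀ᶠ k : ℕ in atTop, 3 * log k / k ≤ 1 / 10000 := by
  have h := (isLittleO_log_id_atTop.tendsto_div_nhds_zero.comp
    tendsto_natCast_atTop_atTop).const_mul 3
  simp only [mul_zero] at h
  filter_upwards [h.eventually_le_const (by norm_num : (0 : ℝ) < 1 / 10000)] with k hk
  simpa [mul_div_assoc] using hk

lemma eventually_mul_div_two_pow_le : ∀ᶠ k : ℕ in atTop, 240 * (k : ℝ) / 2 ^ k ≤ 1 := by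
  have h := (tendsto_pow_const_div_const_pow_of_one_lt 1 one_lt_two).const_mul 240
  simp only [mul_zero, pow_one] at h
  filter_upwards [h.eventually_le_const zero_lt_one] with k hk
  simpa [mul_div_assoc] using hk

/-- Claim 1 of the paper: for all sufficiently large `k` and every `y ∈ [0,1)`,
for every `α` with `1 − 3 ln k/k ≤ α ≤ 2^{−1/k}`, one has `M(α) > M(1)`. -/
theorem M_not_left :
    ∃ k0 : ℕ, ∀ k : ℕ, k0 ≤ k → ∀ y : ℝ, 0 ≤ y → y < 1 →
      ∀ α : ℝ, 1 - 3 * Real.log k / k ≤ α → α ≤ (2:ℝ) ^ (-(1:ℝ)/(k:ℝ)) →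
        Mfun k y 1 < Mfun k y α := by
  obtain ⟨k0, hk0⟩ := eventually_atTop.1 ((eventually_gt_atTop 0).and
    (eventually_three_mul_log_div_le.and eventually_mul_div_two_pow_le))
  refine ⟨k0, fun k hk y hy0 hy1 α hα1 hα2 => ?_⟩
  obtain ⟨hk_pos, hk_log, hk_pow⟩ := hk0 k hk
  have hα_le_one : α ≤ 1 :=
    hα2.trans (rpow_le_one_of_one_le_of_nonpos one_le_two (by simp [neg_div]))
  have hα0 : 0 ≤ α := by linarith
  exact Mfun_one_lt hk_pos hk_pow hy0 hy1 hα0 (pow_le_half_of_le_rpow hk_pos hα0 hα2)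
    (hEnt_nonneg hα0 hα_le_one) (hEnt_le_three_div_hundred (by linarith) hα_le_one)

end
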